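/- arXiv:2602.20313 — 2 statements merged into one kernel-verified Lean document; each statement's English description precedes it below -/
import Mathlib

section
/- Let Φ(u) = ∑_{n=1}^∞ (2π²n⁴e^{9u} − 3πn²e^{5u})·e^{-πn²e^{4u}} and let Φ_N(u) denote its partial sum up to n = N. Then for all u ∈ [0, 0.21], |Φ(u) − Φ₅₀(u)| < 10^{-70}. -/
/-!
For `n ≥ 51` and `0 ≤ u ≤ 2/9` the polynomial factor of the `n`-th term is at most
`n⁶ e² ≤ e^{6n + 2}`, while the Gaussian factor is at most `e^{-3n²}`; hence the term is at most
`e^{-(n + 200)} ≤ 2^{-(n + 200)}`, and the tail beyond `n = 50` is at most `2^{-250} < 10^{-70}`.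
-/

open Real

/-- The `n`-th term (for `n ≥ 1`) of the series defining the de Bruijn–Newman kernel `Φ`. -/
noncomputable def phiTerm (n : ℕ) (u : ℝ) : ℝ :=
  (2 * π ^ 2 * (n : ℝ) ^ 4 * Real.exp (9 * u) - 3 * π * (n : ℝ) ^ 2 * Real.exp (5 * u)) *
    Real.exp (-(π * (n : ℝ) ^ 2 * Real.exp (4 * u)))

/-- The de Bruijn–Newman kernel `Φ(u) = ∑_{n=1}^∞ (2π²n⁴e^{9u} − 3πn²e^{5u})e^{−πn²e^{4u}}`. -/
noncomputable def Phi (u : ℝ) : ℝ := ∑' n : ℕ, phiTerm (n + 1) u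

/-- The partial sum `Φ_N(u) = ∑_{n=1}^N (2π²n⁴e^{9u} − 3πn²e^{5u})e^{−πn²e^{4u}}`. -/
noncomputable def PhiPartial (N : ℕ) (u : ℝ) : ℝ := ∑ n ∈ Finset.range N, phiTerm (n + 1) u

lemma exp_neg_natCast_le_half_pow (m : ℕ) : exp (-m) ≤ (1 / 2) ^ m := by
  rw [show -(m : ℝ) = m * (-1) by ring, exp_nat_mul]
  gcongr
  exact exp_neg_one_lt_half.le

lemma natCast_pow_le_exp (n k : ℕ) : (n : ℝ) ^ k ≤ exp (k * n) := by
  rw [exp_nat_mul]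
  gcongr
  linarith [add_one_le_exp (n : ℝ)]

lemma abs_phiTerm_le (n : ℕ) {u : ℝ} (hu : 0 ≤ u) :
    |phiTerm n u| ≤ 5 * π ^ 2 * n ^ 4 * exp (9 * u) * exp (-(π * n ^ 2)) := by
  have h_sq_le : (n : ℝ) ^ 2 ≤ n ^ 4 := by
    rcases Nat.eq_zero_or_pos n with rfl | hn
    · simp
    · exact pow_le_pow_right₀ (by exact_mod_cast hn) (by norm_num)
  have h_coeff : |2 * π ^ 2 * n ^ 4 * exp (9 * u) - 3 * π * n ^ 2 * exp (5 * u)|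
      ≤ 5 * π ^ 2 * n ^ 4 * exp (9 * u) := by
    have h_pi : π ≤ π ^ 2 := le_self_pow₀ (by linarith [pi_gt_three]) (by norm_num)
    have h_second : 3 * π * n ^ 2 * exp (5 * u) ≤ 3 * π ^ 2 * n ^ 4 * exp (9 * u) := by
      gcongr; linarith
    have h_first_nonneg : 0 ≤ π ^ 2 * n ^ 4 * exp (9 * u) := by positivity
    have h_second_nonneg : 0 ≤ 3 * π * n ^ 2 * exp (5 * u) := by positivity
    rw [abs_le]
    constructor <;> linarith
  have h_gauss : exp (-(π * n ^ 2 * exp (4 * u))) ≤ exp (-(π * n ^ 2)) :=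
    exp_le_exp.2 <| neg_le_neg <|
      le_mul_of_one_le_right (by positivity) (one_le_exp (by linarith))
  rw [phiTerm, abs_mul, abs_exp]
  exact mul_le_mul h_coeff h_gauss (exp_pos _).le (by positivity)

lemma abs_phiTerm_le_half_pow {n : ℕ} (hn : 51 ≤ n) {u : ℝ} (hu : u ∈ Set.Icc (0 : ℝ) (2 / 9)) :
    |phiTerm n u| ≤ (1 / 2) ^ (n + 200) := by
  have hn' : (51 : ℝ) ≤ n := by exact_mod_cast hn
  have h_const : 5 * π ^ 2 ≤ (n : ℝ) ^ 2 := by nlinarith [pi_lt_four, pi_pos]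
  calc |phiTerm n u| ≤ 5 * π ^ 2 * n ^ 4 * exp (9 * u) * exp (-(π * n ^ 2)) :=
        abs_phiTerm_le n hu.1
    _ ≤ n ^ 2 * n ^ 4 * exp 2 * exp (-(3 * n ^ 2)) := by
        gcongr
        · linarith [hu.2]
        · exact pi_gt_three.le
    _ ≤ exp (6 * n) * exp 2 * exp (-(3 * n ^ 2)) := by
        rw [← pow_add]
        gcongr
        exact_mod_cast natCast_pow_le_exp n 6
    _ = exp (6 * n + 2 - 3 * n ^ 2) := by rw [← exp_add, ← exp_add]; ring_nf
    _ ≤ exp (-((n + 200 : ℕ) : ℝ)) := exp_le_exp.2 (by push_cast; nlinarith)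
    _ ≤ (1 / 2) ^ (n + 200) := exp_neg_natCast_le_half_pow _

theorem truncation_bound (u : ℝ) (hu : u ∈ Set.Icc (0:ℝ) 0.21) :
    |Phi u - PhiPartial 50 u| < 1e-70 := by
  have hu' : u ∈ Set.Icc (0 : ℝ) (2 / 9) := Set.Icc_subset_Icc_right (by norm_num) hu
  have h_tail : ∀ k : ℕ, ‖phiTerm (k + 50 + 1) u‖ ≤ (1 / 2) ^ 251 * (1 / 2) ^ k := fun k => by
    rw [Real.norm_eq_abs, ← pow_add, add_comm 251]
    exact abs_phiTerm_le_half_pow (by omega) hu'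
  have h_summable : Summable fun k : ℕ => phiTerm (k + 50 + 1) u :=
    .of_norm_bounded (summable_geometric_two.mul_left _) h_tail
  have h_split := ((summable_nat_add_iff (f := fun n => phiTerm (n + 1) u) 50).mp
    h_summable).sum_add_tsum_nat_add 50
  rw [Phi, PhiPartial, ← h_split, add_sub_cancel_left]
  calc |∑' k : ℕ, phiTerm (k + 50 + 1) u| ≤ (1 / 2) ^ 251 * 2 :=
        tsum_of_norm_bounded (hasSum_geometric_two.mul_left _) h_tail
    _ < 1e-70 := by norm_num
end

section
/- Let K be real-analytic on an open interval containing all points u₀ + (i−j)h₀ (for 0 ≤ i, j ≤ r−1 and h near h₀ = 0). Then the function D_r(h) = det[K(u₀ + (i−j)h)]_{i,j=0}^{r−1} vanishes to order at least r(r−1) at h = 0. -/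
/-!
Write `K (u₀ + y) = ∑_{k<n} c_k y^k + y^n F(y)` with `F` analytic at `0` and `n = r(r-1)`.
In the ring of functions analytic at `0`, the matrix `K (u₀ + (u_i + v_j) h)` is congruent
modulo `h^n` to `∑_{k<n} c_k ((u_i + v_j) h)^k`, which factors as
`U · diag(h^a) · C · diag(h^b) · V` with `U i a = u_i^a` and `V b j = v_j^b`. Expanding the
determinant multilinearly along the rows of `U`, only injective choices of columns survive, each
carrying at least `h^(0 + 1 + ⋯ + (r-1))`; the same argument along the columns of `V` gives the
other factor `h^(r(r-1)/2)`.
-/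

open Finset Matrix

theorem Matrix.det_mul_eq_sum_prod_mul_det_submatrix {m ι R : Type*} [Fintype m] [DecidableEq m]
    [Fintype ι] [CommRing R] (A : Matrix m ι R) (N : Matrix ι m R) :
    (A * N).det = ∑ α : m → ι, (∏ i, A i (α i)) * (N.submatrix α id).det := by
  have hrows : A * N = of fun i => ∑ p, A i p • N p := by
    ext i j
    simp [mul_apply, Finset.sum_apply]
  rw [hrows]
  exact (detRowAlternating.toMultilinearMap.map_sum _).trans
    (sum_congr rfl fun α _ => detRowAlternating.toMultilinearMap.map_smul_univ _ _)

theorem dvd_det_sub_det {n R : Type*} [Fintype n] [DecidableEq n] [CommRing R] {y : R}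
    {A B : Matrix n n R} (h : ∀ i j, y ∣ A i j - B i j) : y ∣ A.det - B.det := by
  let π := Ideal.Quotient.mk (Ideal.span {y})
  rw [← Ideal.mem_span_singleton, ← Ideal.Quotient.eq, π.map_det, π.map_det]
  congr 1
  ext i j
  exact Ideal.Quotient.eq.2 (Ideal.mem_span_singleton.2 (h i j))

theorem sum_range_le_sum_of_injective {r : ℕ} {α : Fin r → ℕ} (hα : Function.Injective α) :
    ∑ i ∈ range r, i ≤ ∑ i, α i := by
  have hinj : Function.Injective fun i => (α i : ℤ) := Nat.cast_injective.comp hα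
  have h := sum_range_le_sum (s := univ.image fun i => (α i : ℤ)) (c := 0) (by simp)
  rw [card_image_of_injective _ hinj, card_univ, Fintype.card_fin,
    sum_image fun _ _ _ _ h => hinj h] at h
  exact_mod_cast (by simpa using h : ((∑ i ∈ range r, i : ℕ) : ℤ) ≤ ∑ i, (α i : ℤ))

theorem pow_dvd_det_mul_diagonal_pow_mul {R : Type*} [CommRing R] {r n d : ℕ} (x : R)
    (A : Matrix (Fin r) (Fin n) R) (N : Matrix (Fin n) (Fin r) R)
    (hN : ∀ α : Fin r → Fin n, x ^ d ∣ (N.submatrix α id).det) :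
    x ^ (∑ i ∈ range r, i + d) ∣ (A * diagonal (fun a : Fin n => x ^ (a : ℕ)) * N).det := by
  rw [det_mul_eq_sum_prod_mul_det_submatrix]
  refine dvd_sum fun α _ => ?_
  by_cases hα : Function.Injective α
  · have hprod : ∏ i, (A * diagonal fun a : Fin n => x ^ (a : ℕ)) i (α i)
        = (∏ i, A i (α i)) * x ^ ∑ i, (α i : ℕ) := by
      simp [mul_diagonal, prod_mul_distrib, prod_pow_eq_pow_sum]
    rw [hprod, pow_add]
    exact mul_dvd_mul (dvd_mul_of_dvd_right
      (pow_dvd_pow x (sum_range_le_sum_of_injective (Fin.val_injective.comp hα))) _) (hN α)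
  · obtain ⟨i, j, hij, hne⟩ := Function.not_injective_iff.mp hα
    rw [det_zero_of_row_eq hne (by ext; simp [hij]), mul_zero]
    exact dvd_zero _

theorem sum_mul_add_pow_eq_sum_sum {R : Type*} [CommSemiring R] (n : ℕ) (c : ℕ → R) (y z : R) :
    ∑ k ∈ range n, c k * (y + z) ^ k = ∑ a ∈ range n, ∑ b ∈ range n,
      y ^ a * ((if a + b < n then c (a + b) * (a + b).choose a else 0) * z ^ b) := by
  let f a b := y ^ a * (c (a + b) * (a + b).choose a * z ^ b)
  calc ∑ k ∈ range n, c k * (y + z) ^ k = ∑ k ∈ range n, ∑ a ∈ range (k + 1), f a (k - a) := by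
        refine sum_congr rfl fun k _ => ?_
        rw [add_pow, mul_sum]
        refine sum_congr rfl fun a ha => ?_
        simp only [f, Nat.add_sub_cancel' (Nat.lt_succ_iff.mp (mem_range.mp ha))]
        ring
    _ = ∑ a ∈ range n, ∑ b ∈ range (n - a), f a b := sum_range_diag_flip n f
    _ = _ := by
        refine sum_congr rfl fun a _ => ?_
        simp only [ite_mul, zero_mul, mul_ite, mul_zero, ← sum_filter]
        congr 1
        ext b
        simp only [mem_range, mem_filter]
        omega

theorem pow_dvd_det_sum_mul_add_mul_pow {R : Type*} [CommRing R] {r : ℕ} (n : ℕ) (x : R)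
    (c : ℕ → R) (u v : Fin r → R) :
    x ^ (r * (r - 1)) ∣ (of fun i j => ∑ k ∈ range n, c k * ((u i + v j) * x) ^ k).det := by
  let D : Matrix (Fin n) (Fin n) R := diagonal fun a => x ^ (a : ℕ)
  let U : Matrix (Fin r) (Fin n) R := of fun i a => u i ^ (a : ℕ)
  let V : Matrix (Fin n) (Fin r) R := of fun b j => v j ^ (b : ℕ)
  let C : Matrix (Fin n) (Fin n) R :=
    of fun a b => if (a + b : ℕ) < n then c (a + b) * (a + b : ℕ).choose a else 0
  have hfactor :
      (of fun i j => ∑ k ∈ range n, c k * ((u i + v j) * x) ^ k) = U * D * (C * D * V) := by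
    ext i j
    rw [of_apply, mul_apply, add_mul, sum_mul_add_pow_eq_sum_sum, ← Fin.sum_univ_eq_sum_range]
    refine sum_congr rfl fun a _ => ?_
    rw [← Fin.sum_univ_eq_sum_range, mul_diagonal, mul_apply (M := C * D), mul_sum]
    refine sum_congr rfl fun b _ => ?_
    simp only [U, V, C, D, mul_diagonal, of_apply]
    ring
  have hcolumns : ∀ α : Fin r → Fin n,
      x ^ (∑ i ∈ range r, i) ∣ ((C * D * V).submatrix α id).det := by
    intro α
    rw [← det_transpose, submatrix_mul _ _ _ id _ Function.bijective_id,
      submatrix_mul _ _ _ id _ Function.bijective_id]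
    simpa [transpose_mul, Matrix.mul_assoc, D] using
      pow_dvd_det_mul_diagonal_pow_mul (d := 0) x Vᵀ (C.submatrix α id)ᵀ (by simp)
  rw [hfactor, ← sum_range_id_mul_two, mul_two]
  exact pow_dvd_det_mul_diagonal_pow_mul x U _ hcolumns

def analyticAtSubalgebra (𝕜 : Type*) [NontriviallyNormedField 𝕜] (z₀ : 𝕜) :
    Subalgebra 𝕜 (𝕜 → 𝕜) where
  carrier := {f | AnalyticAt 𝕜 f z₀}
  mul_mem' := AnalyticAt.mul
  add_mem' := AnalyticAt.add
  algebraMap_mem' _ := analyticAt_const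

section Analytic

variable {𝕜 : Type*} [NontriviallyNormedField 𝕜] [CharZero 𝕜]

theorem AnalyticAt.exists_det_apply_add_mul_eq_pow_mul [CompleteSpace 𝕜] {K : 𝕜 → 𝕜} {u₀ : 𝕜}
    (hK : AnalyticAt 𝕜 K u₀) {r : ℕ} (u v : Fin r → 𝕜) :
    ∃ G : 𝕜 → 𝕜, AnalyticAt 𝕜 G 0 ∧
      ∀ h, (of fun i j => K (u₀ + (u i + v j) * h)).det = h ^ (r * (r - 1)) * G h := by
  set n := r * (r - 1)
  let S := analyticAtSubalgebra 𝕜 0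
  have hK₀ : AnalyticAt 𝕜 (fun y => K (u₀ + y)) 0 := hK.comp_of_eq (by fun_prop) (add_zero u₀)
  obtain ⟨F, hF, hKF⟩ := hK₀.exists_eq_sum_add_pow_mul n
  let x : S := ⟨id, analyticAt_id⟩
  let E : Matrix (Fin r) (Fin r) S := of fun i j =>
    ⟨fun h => K (u₀ + (u i + v j) * h), hK₀.comp_of_eq (by fun_prop) (mul_zero _)⟩
  let c : ℕ → S := fun k => algebraMap 𝕜 S (iteratedDeriv k (fun y => K (u₀ + y)) 0 / k.factorial)
  let T : Matrix (Fin r) (Fin r) S := of fun i j =>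
    ∑ k ∈ range n, c k * ((algebraMap 𝕜 S (u i) + algebraMap 𝕜 S (v j)) * x) ^ k
  let Rem : Fin r → Fin r → S := fun i j => ⟨fun h => (u i + v j) ^ n * F ((u i + v j) * h),
    analyticAt_const.mul (hF.comp_of_eq (by fun_prop) (mul_zero _))⟩
  have hET : ∀ i j, x ^ n ∣ E i j - T i j := by
    refine fun i j => ⟨Rem i j, ?_⟩
    ext h
    simp only [of_apply, AddSubgroupClass.coe_sub, AddSubmonoidClass.coe_finsetSum,
      MulMemClass.coe_mul, SubalgebraClass.coe_algebraMap, SubmonoidClass.coe_pow,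
      AddMemClass.coe_add, Pi.sub_apply, Finset.sum_apply, Pi.mul_apply, Pi.algebraMap_apply,
      Algebra.algebraMap_self, map_div₀, RingHom.id_apply, map_natCast, Pi.pow_apply,
      Pi.add_apply, id_eq, E, T, c, x, Rem]
    rw [hKF, smul_eq_mul, add_sub_right_comm, ← sum_sub_distrib,
      sum_eq_zero fun k _ => by rw [smul_eq_mul]; ring, zero_add, mul_pow]
    ring
  obtain ⟨G, hG⟩ : x ^ n ∣ E.det := by
    have hT : x ^ n ∣ T.det := pow_dvd_det_sum_mul_add_mul_pow n x c _ _
    simpa using dvd_add (dvd_det_sub_det hET) hT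
  refine ⟨G, G.2, fun h => ?_⟩
  let ev : S →+* 𝕜 := (Pi.evalRingHom _ h).comp S.val.toRingHom
  have hev := congr_arg ev hG
  rwa [ev.map_det, map_mul, map_pow] at hev

theorem iteratedDeriv_eq_zero_of_eq_pow_smul {E : Type*} [NormedAddCommGroup E] [NormedSpace 𝕜 E]
    [CompleteSpace E] {f G : 𝕜 → E} {m n : ℕ} (hG : AnalyticAt 𝕜 G 0)
    (hf : ∀ h, f h = h ^ n • G h) (hm : m < n) :
    iteratedDeriv m f 0 = 0 := by
  have hfa : AnalyticAt 𝕜 f 0 := by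
    rw [funext hf]
    fun_prop
  refine (natCast_le_analyticOrderAt_iff_iteratedDeriv_eq_zero hfa).1 ?_ m hm
  exact (natCast_le_analyticOrderAt hfa).2 ⟨G, hG, .of_forall fun h => by simp [hf]⟩

end Analytic

theorem toeplitz_det_vanishing_order_general (r : ℕ) (u₀ : ℝ) (K : ℝ → ℝ)
    (s : Set ℝ) (hK : AnalyticOnNhd ℝ K s)
    (ε : ℝ) (hε : 0 < ε)
    (hmem : ∀ h : ℝ, |h| < ε → ∀ i j : Fin r, u₀ + ((i : ℝ) - (j : ℝ)) * h ∈ s) :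
    ∀ m : ℕ, m < r * (r - 1) →
      iteratedDeriv m
        (fun h : ℝ => (Matrix.of fun i j : Fin r => K (u₀ + ((i : ℝ) - (j : ℝ)) * h)).det)
        0 = 0 := by
  intro m hm
  have hr : 0 < r := Nat.pos_of_ne_zero (by rintro rfl; simp at hm)
  have hu₀ : u₀ ∈ s := by simpa using hmem 0 (by simpa using hε) ⟨0, hr⟩ ⟨0, hr⟩
  obtain ⟨G, hG, hdet⟩ := (hK u₀ hu₀).exists_det_apply_add_mul_eq_pow_mul
    (fun i : Fin r => (i : ℝ)) (fun j => -(j : ℝ))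
  exact iteratedDeriv_eq_zero_of_eq_pow_smul hG (fun h => by simpa [sub_eq_add_neg] using hdet h) hm

theorem toeplitz_det_vanishing_order (r : ℕ) (hr : 2 ≤ r) (u₀ : ℝ) (K : ℝ → ℝ)
    (s : Set ℝ) (hs : IsOpen s) (hK : AnalyticOnNhd ℝ K s)
    (ε : ℝ) (hε : 0 < ε)
    (hmem : ∀ h : ℝ, |h| < ε → ∀ i j : Fin r, u₀ + ((i : ℝ) - (j : ℝ)) * h ∈ s) :
    ∀ m : ℕ, m < r * (r - 1) →
      iteratedDeriv m
        (fun h : ℝ => (Matrix.of fun i j : Fin r => K (u₀ + ((i : ℝ) - (j : ℝ)) * h)).det)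
        0 = 0 :=
  toeplitz_det_vanishing_order_general r u₀ K s hK ε hε hmem
end
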